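/- arXiv:1207.1443 — 5 statements merged into one kernel-verified Lean document; each statement's English description precedes it below -/
import Mathlib

section
/- The stabilizer group of the subsystem toric code on the L×L torus, generated by the 2L² operators {S^X_p, S^Z_p}, has exactly 2(L²−1) independent generators; consequently the stabilizer code encodes k' = 3L² − 2(L²−1) = L² + 2 qubits. -/
/-!
A relation among the supports `S p` is a coefficient vector `c` on the plaquettes with
`∑ c p • ind (S p) = 0`. Each horizontal edge lies in the supports of exactly the two plaquettes
stacked vertically next to it, and each vertical edge in those of the two horizontally adjacent
plaquettes, so a relation is invariant under both unit shifts of the torus, hence constant.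
Conversely every qubit lies in exactly two supports, so the all-ones vector is a relation. Hence
each of the X- and Z-families spans a space of dimension `L² - 1`, and since they live in the two
complementary halves of the symplectic space, the dimensions add.
-/

/-- Qubits of the subsystem toric code on the `L × L` torus:
`(0,x,y)` is the vertex at `(x,y)`, `(1,x,y)` is the horizontal edge from `(x,y)` to `(x+1,y)`,
and `(2,x,y)` is the vertical edge from `(x,y)` to `(x,y+1)`. -/
abbrev Q (L : ℕ) := Fin 3 × ZMod L × ZMod L

/-- Support of the weight-6 X-type stabilizer of plaquette `p` (product of SW and NE triangles). -/
def SXsup (L : ℕ) (p : ZMod L × ZMod L) : Finset (Q L) :=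
  {(0, p.1, p.2), (0, p.1 + 1, p.2 + 1), (1, p.1, p.2), (1, p.1, p.2 + 1),
   (2, p.1, p.2), (2, p.1 + 1, p.2)}

/-- Support of the weight-6 Z-type stabilizer of plaquette `p` (product of SE and NW triangles). -/
def SZsup (L : ℕ) (p : ZMod L × ZMod L) : Finset (Q L) :=
  {(0, p.1 + 1, p.2), (0, p.1, p.2 + 1), (1, p.1, p.2), (1, p.1, p.2 + 1),
   (2, p.1, p.2), (2, p.1 + 1, p.2)}

/-- SW (X-type) triangle of plaquette `p`. -/
def TSW (L : ℕ) (p : ZMod L × ZMod L) : Finset (Q L) :=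
  {(0, p.1, p.2), (1, p.1, p.2), (2, p.1, p.2)}

/-- NE (X-type) triangle of plaquette `p`. -/
def TNE (L : ℕ) (p : ZMod L × ZMod L) : Finset (Q L) :=
  {(0, p.1 + 1, p.2 + 1), (1, p.1, p.2 + 1), (2, p.1 + 1, p.2)}

/-- SE (Z-type) triangle of plaquette `p`. -/
def TSE (L : ℕ) (p : ZMod L × ZMod L) : Finset (Q L) :=
  {(0, p.1 + 1, p.2), (1, p.1, p.2), (2, p.1 + 1, p.2)}

/-- NW (Z-type) triangle of plaquette `p`. -/
def TNW (L : ℕ) (p : ZMod L × ZMod L) : Finset (Q L) :=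
  {(0, p.1, p.2 + 1), (1, p.1, p.2 + 1), (2, p.1, p.2)}

/-- The horizontal line `Γ` at height `y₀`: all vertices and horizontal edges with `y = y₀`. -/
def Gam (L : ℕ) [NeZero L] (y₀ : ZMod L) : Finset (Q L) :=
  Finset.univ.filter fun q => (q.1 = 0 ∨ q.1 = 1) ∧ q.2.2 = y₀

/-- The vertical line `Λ` at horizontal position `x₀`: all vertices and vertical edges with `x = x₀`. -/
def Lam (L : ℕ) [NeZero L] (x₀ : ZMod L) : Finset (Q L) :=
  Finset.univ.filter fun q => (q.1 = 0 ∨ q.1 = 2) ∧ q.2.1 = x₀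

/-- `F₂`-indicator vector of a finite set. -/
def ind {α : Type*} [DecidableEq α] (S : Finset α) : α → ZMod 2 :=
  fun i => if i ∈ S then 1 else 0

/-- The symplectic `F₂`-vector of an X-type Pauli operator with support `S`. -/
def xVec (L : ℕ) (S : Finset (Q L)) : (Q L → ZMod 2) × (Q L → ZMod 2) := (ind S, 0)

/-- The symplectic `F₂`-vector of a Z-type Pauli operator with support `S`. -/
def zVec (L : ℕ) (S : Finset (Q L)) : (Q L → ZMod 2) × (Q L → ZMod 2) := (0, ind S)

open Finset Submodule

section Incidence

variable {ι α : Type*} [Fintype ι] [DecidableEq α]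

lemma linearCombination_ind_apply (S : ι → Finset α) (c : ι → ZMod 2) (q : α) :
    Fintype.linearCombination (ZMod 2) (fun p => ind (S p)) c q = ∑ p with q ∈ S p, c p := by
  simp [Fintype.linearCombination_apply, Finset.sum_apply, ind, Finset.sum_filter]

variable [DecidableEq ι] {S : ι → Finset α}

lemma linearCombination_ind_apply_of_mem_iff (c : ι → ZMod 2) {q : α} {a b : ι} (hab : a ≠ b)
    (hq : ∀ p, q ∈ S p ↔ p = a ∨ p = b) :
    Fintype.linearCombination (ZMod 2) (fun p => ind (S p)) c q = c a + c b := by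
  rw [linearCombination_ind_apply, Finset.filter_congr (fun p _ => hq p), Finset.filter_or,
    Finset.filter_eq', Finset.filter_eq', if_pos (mem_univ _), if_pos (mem_univ _),
    ← Finset.insert_eq, Finset.sum_pair hab]

lemma linearCombination_ind_one_eq_zero
    (hS : ∀ q, ∃ a b, a ≠ b ∧ ∀ p, q ∈ S p ↔ p = a ∨ p = b) :
    Fintype.linearCombination (ZMod 2) (fun p => ind (S p)) 1 = 0 := by
  ext q
  obtain ⟨a, b, hab, hq⟩ := hS q
  exact (linearCombination_ind_apply_of_mem_iff 1 hab hq).trans (CharTwo.add_self_eq_zero 1)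

lemma apply_eq_of_mem_ker_of_mem_iff {c : ι → ZMod 2}
    (hc : c ∈ LinearMap.ker (Fintype.linearCombination (ZMod 2) fun p => ind (S p)))
    {q : α} {a b : ι} (hab : a ≠ b) (hq : ∀ p, q ∈ S p ↔ p = a ∨ p = b) : c a = c b := by
  have hq0 := congrFun (LinearMap.mem_ker.mp hc) q
  rwa [linearCombination_ind_apply_of_mem_iff c hab hq, Pi.zero_apply, CharTwo.add_eq_zero]
    at hq0

end Incidence

lemma finrank_span_range_of_ker_eq_span_one {K V ι : Type*} [Field K] [AddCommGroup V]
    [Module K V] [Fintype ι] [Nonempty ι] {v : ι → V}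
    (h : LinearMap.ker (Fintype.linearCombination K v) = K ∙ 1) :
    Module.finrank K (span K (Set.range v)) = Fintype.card ι - 1 := by
  have hrank := LinearMap.finrank_range_add_finrank_ker (Fintype.linearCombination K v)
  rw [Fintype.range_linearCombination, h, finrank_span_singleton one_ne_zero,
    Module.finrank_fintype_fun_eq_card] at hrank
  omega

lemma Submodule.finrank_prod {K V W : Type*} [Field K] [AddCommGroup V] [Module K V]
    [AddCommGroup W] [Module K W] [FiniteDimensional K V] [FiniteDimensional K W]
    (A : Submodule K V) (B : Submodule K W) :
    Module.finrank K (A.prod B) = Module.finrank K A + Module.finrank K B := by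
  let e : A.prod B ≃ₗ[K] A × B :=
    { toFun x := (⟨x.1.1, x.2.1⟩, ⟨x.1.2, x.2.2⟩)
      invFun x := ⟨(x.1, x.2), x.1.2, x.2.2⟩
      left_inv _ := rfl
      right_inv _ := rfl
      map_add' _ _ := rfl
      map_smul' _ _ := rfl }
  rw [e.finrank_eq, Module.finrank_prod]

lemma ZMod.apply_eq_apply_zero_of_periodic {L : ℕ} [NeZero L] {β : Type*} {f : ZMod L → β}
    (hf : Function.Periodic f 1) (x : ZMod L) : f x = f 0 := by
  obtain ⟨n, rfl⟩ := ZMod.natCast_zmod_surjective x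
  induction n with
  | zero => rw [Nat.cast_zero]
  | succ n ih => rw [Nat.cast_succ, hf, ih]

section Torus

variable {L : ℕ}

/-- The incidence pattern shared by the X- and Z-type supports: each edge lies in the supports of
exactly the two plaquettes it separates. -/
structure IsToricSupport (S : ZMod L × ZMod L → Finset (Q L)) : Prop where
  mem_hEdge_iff : ∀ x y p, (1, x, y + 1) ∈ S p ↔ p = (x, y + 1) ∨ p = (x, y)
  mem_vEdge_iff : ∀ x y p, (2, x + 1, y) ∈ S p ↔ p = (x + 1, y) ∨ p = (x, y)
  exists_mem_vertex_iff : ∀ x y, ∃ a b, a ≠ b ∧ ∀ p, (0, x, y) ∈ S p ↔ p = a ∨ p = b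

variable [Fact (1 < L)]

lemma isToricSupport_SXsup : IsToricSupport (SXsup L) where
  mem_hEdge_iff x y p := by simp [SXsup, Prod.ext_iff, eq_comm]
  mem_vEdge_iff x y p := by simp [SXsup, Prod.ext_iff, eq_comm]
  exists_mem_vertex_iff x y :=
    ⟨(x, y), (x - 1, y - 1), fun h => by simpa [eq_sub_iff_add_eq] using congrArg Prod.fst h,
      fun p => by simp [SXsup, Prod.ext_iff, eq_comm, eq_sub_iff_add_eq]⟩

lemma isToricSupport_SZsup : IsToricSupport (SZsup L) where
  mem_hEdge_iff x y p := by simp [SZsup, Prod.ext_iff, eq_comm]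
  mem_vEdge_iff x y p := by simp [SZsup, Prod.ext_iff, eq_comm]
  exists_mem_vertex_iff x y :=
    ⟨(x - 1, y), (x, y - 1), fun h => by simpa using congrArg Prod.fst h,
      fun p => by simp [SZsup, Prod.ext_iff, eq_comm, eq_sub_iff_add_eq]⟩

variable [NeZero L] {S : ZMod L × ZMod L → Finset (Q L)}

lemma IsToricSupport.one_mem_ker (hS : IsToricSupport S) :
    1 ∈ LinearMap.ker (Fintype.linearCombination (ZMod 2) fun p => ind (S p)) := by
  refine LinearMap.mem_ker.mpr (linearCombination_ind_one_eq_zero fun ⟨t, x, y⟩ => ?_)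
  fin_cases t
  · exact hS.exists_mem_vertex_iff x y
  · obtain ⟨y, rfl⟩ : ∃ y', y = y' + 1 := ⟨y - 1, (sub_add_cancel y 1).symm⟩
    exact ⟨_, _, by simp, hS.mem_hEdge_iff x y⟩
  · obtain ⟨x, rfl⟩ : ∃ x', x = x' + 1 := ⟨x - 1, (sub_add_cancel x 1).symm⟩
    exact ⟨_, _, by simp, hS.mem_vEdge_iff x y⟩

lemma IsToricSupport.ker_le_span_one (hS : IsToricSupport S) :
    LinearMap.ker (Fintype.linearCombination (ZMod 2) fun p => ind (S p)) ≤ ZMod 2 ∙ 1 := by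
  intro c hc
  have hx (x y : ZMod L) : c (x + 1, y) = c (x, y) :=
    apply_eq_of_mem_ker_of_mem_iff hc (by simp) (hS.mem_vEdge_iff x y)
  have hy (x y : ZMod L) : c (x, y + 1) = c (x, y) :=
    apply_eq_of_mem_ker_of_mem_iff hc (by simp) (hS.mem_hEdge_iff x y)
  refine mem_span_singleton.mpr ⟨c (0, 0), funext fun ⟨x, y⟩ => ?_⟩
  rw [Pi.smul_apply, Pi.one_apply, smul_eq_mul, mul_one,
    ZMod.apply_eq_apply_zero_of_periodic (f := fun x => c (x, y)) (hx · y) x,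
    ZMod.apply_eq_apply_zero_of_periodic (f := fun y => c (0, y)) (hy 0 ·) y]

lemma IsToricSupport.finrank_span (hS : IsToricSupport S) :
    Module.finrank (ZMod 2) (span (ZMod 2) (Set.range fun p => ind (S p))) = L ^ 2 - 1 := by
  rw [finrank_span_range_of_ker_eq_span_one
    (hS.ker_le_span_one.antisymm ((span_singleton_le_iff_mem _ _).mpr hS.one_mem_ker)),
    Fintype.card_prod, ZMod.card, sq]

end Torus

/-- the stabilizer group of the subsystem toric code on the `L × L` torus
(`L ≥ 2`), generated by the `2L²` operators `S^X_p, S^Z_p`, has exactly `2(L² − 1)` independent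
generators (the `F₂`-span of their symplectic vectors has dimension `2(L²−1)`); consequently the
stabilizer code on `n = 3L²` qubits encodes `k' = 3L² − 2(L²−1) = L² + 2` qubits. -/
theorem stabilizer_group_rank (L : ℕ) [NeZero L] (hL : 2 ≤ L) :
    Module.finrank (ZMod 2) (Submodule.span (ZMod 2)
        ((Set.range fun p : ZMod L × ZMod L => xVec L (SXsup L p)) ∪
         (Set.range fun p : ZMod L × ZMod L => zVec L (SZsup L p)))) = 2 * (L ^ 2 - 1) ∧
    3 * L ^ 2 - 2 * (L ^ 2 - 1) = L ^ 2 + 2 := by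
  have : Fact (1 < L) := ⟨hL⟩
  have hX : (Set.range fun p => xVec L (SXsup L p)) =
      LinearMap.inl (ZMod 2) _ _ '' Set.range fun p => ind (SXsup L p) :=
    Set.range_comp (LinearMap.inl (ZMod 2) _ _) _
  have hZ : (Set.range fun p => zVec L (SZsup L p)) =
      LinearMap.inr (ZMod 2) _ _ '' Set.range fun p => ind (SZsup L p) :=
    Set.range_comp (LinearMap.inr (ZMod 2) _ _) _
  refine ⟨?_, by have : 1 ≤ L ^ 2 := Nat.one_le_pow _ _ (by omega); omega⟩
  rw [hX, hZ, LinearMap.span_inl_union_inr, Submodule.finrank_prod,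
    isToricSupport_SXsup.finrank_span, isToricSupport_SZsup.finrank_span, two_mul]
end

section
/- Any triangle operator G(T) of the subsystem toric code commutes with every stabilizer S^X_p and S^Z_p: if the triangle T does not belong to plaquette p their supports are disjoint or even-overlapping, and if T belongs to p then a Z-type triangle anticommutes with both X-type triangles constituting S^X_p, so it commutes with their product. -/
lemma card3 {α : Type*} [DecidableEq α] (a b c : α) (S : Finset α)
    (hab : a ≠ b) (hac : a ≠ c) (hbc : b ≠ c) :
    ({a, b, c} ∩ S).card
      = (if a ∈ S then 1 else 0) + (if b ∈ S then 1 else 0) + (if c ∈ S then 1 else 0) := by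
  have h : ({a, b, c} : Finset α) ∩ S = ({a, b, c} : Finset α).filter (· ∈ S) := by
    ext x; simp [and_comm]
  rw [h, Finset.card_filter]
  rw [Finset.sum_insert (by simp [hab, hac]), Finset.sum_insert (by simp [hbc]),
    Finset.sum_singleton, add_assoc]

/-- every triangle operator `G(T)` of the subsystem toric code commutes with
every stabilizer `S^X_p`, `S^Z_p`.  Same-type Pauli operators always commute, so this amounts
to: the support of each X-type triangle (SW, NE) overlaps the support of each `S^Z_q` evenly,
and the support of each Z-type triangle (SE, NW) overlaps the support of each `S^X_q` evenly. -/
theorem triangles_commute_with_stabilizers (L : ℕ) [NeZero L] (hL : 2 ≤ L)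
    (p q : ZMod L × ZMod L) :
    Even ((TSW L p ∩ SZsup L q).card) ∧
    Even ((TNE L p ∩ SZsup L q).card) ∧
    Even ((TSE L p ∩ SXsup L q).card) ∧
    Even ((TNW L p ∩ SXsup L q).card) := by
  have h1 : (1 : ZMod L) ≠ 0 := by
    haveI : Fact (1 < L) := ⟨hL⟩
    exact one_ne_zero
  refine ⟨?_, ?_, ?_, ?_⟩ <;>
    [rw [TSW, SZsup, card3 _ _ _ _ (by simp) (by simp) (by simp)];
     rw [TNE, SZsup, card3 _ _ _ _ (by simp) (by simp) (by simp)];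
     rw [TSE, SXsup, card3 _ _ _ _ (by simp) (by simp) (by simp)];
     rw [TNW, SXsup, card3 _ _ _ _ (by simp) (by simp) (by simp)]] <;>
    simp only [Finset.mem_insert, Finset.mem_singleton, Prod.mk.injEq] <;>
    norm_num <;>
    by_cases e1 : p.1 = q.1 <;> by_cases e2 : p.1 = q.1 + 1 <;>
    by_cases e3 : p.2 = q.2 <;> by_cases e4 : p.2 = q.2 + 1 <;>
    simp_all [left_eq_add, eq_comm, add_right_cancel_iff]
end

section
/- Triangle operators belonging to different plaquettes of the subsystem toric code pairwise commute: for triangles T, T' contained in distinct plaquettes, the supports of an X-type G(T) and a Z-type G(T') intersect in an even number of qubits. -/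
lemma tri_card {β : Type*} [DecidableEq β] (a b c a' b' c' : β) :
    (({((0:Fin 3),a),(1,b),(2,c)} : Finset (Fin 3 × β)) ∩ {((0:Fin 3),a'),(1,b'),(2,c')}).card
      = (if a = a' then 1 else 0) + (if b = b' then 1 else 0) + (if c = c' then 1 else 0) := by
  rw [← Finset.filter_mem_eq_inter]
  simp only [Finset.filter_insert, Finset.filter_singleton, Finset.mem_insert,
    Finset.mem_singleton, Prod.mk.injEq]
  split_ifs <;> simp_all [Finset.card_insert_of_notMem]

/-- triangle operators belonging to different plaquettes pairwise commute.
Same-type triangles always commute, so the content is: for distinct plaquettes `p ≠ q`,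
each X-type triangle of `p` (SW, NE) overlaps each Z-type triangle of `q` (SE, NW) in an
even number of qubits. -/
theorem triangles_of_distinct_plaquettes_commute (L : ℕ) [NeZero L] (hL : 2 ≤ L)
    (p q : ZMod L × ZMod L) (hpq : p ≠ q) :
    Even ((TSW L p ∩ TSE L q).card) ∧
    Even ((TSW L p ∩ TNW L q).card) ∧
    Even ((TNE L p ∩ TSE L q).card) ∧
    Even ((TNE L p ∩ TNW L q).card) := by
  have hne : ¬(p.1 = q.1 ∧ p.2 = q.2) := fun h => hpq (Prod.ext h.1 h.2)
  refine ⟨?_, ?_, ?_, ?_⟩ <;>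
  · simp only [TSW, TSE, TNW, TNE]
    rw [tri_card]
    simp only [Prod.mk.injEq, add_left_inj]
    split_ifs <;> simp_all
end

section
/- The subsystem toric code on the L×L torus has minimum distance exactly L: every Pauli error commuting with all stabilizers and acting nontrivially on the logical qubits (i.e., anticommuting with some logical operator X̄ᵢ or Z̄ᵢ) has weight at least L, and there exists such an operator of weight exactly L. -/
/-- Symplectic form on `F₂`-represented Pauli operators `(a,b)` and `(c,d)`:
they commute iff this vanishes. -/
def sp (L : ℕ) [NeZero L] (a b c d : Q L → ZMod 2) : ZMod 2 :=
  ∑ q : Q L, (a q * d q + b q * c q)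

/-- Weight of the Pauli operator with X-part `a` and Z-part `b`. -/
def wt (L : ℕ) [NeZero L] (a b : Q L → ZMod 2) : ℕ :=
  (Finset.univ.filter fun q : Q L => a q ≠ 0 ∨ b q ≠ 0).card

/-- `(a,b)` commutes with all stabilizers `S^X_p`, `S^Z_p`. -/
def CommutesWithStabilizers (L : ℕ) [NeZero L] (a b : Q L → ZMod 2) : Prop :=
  ∀ p : ZMod L × ZMod L,
    sp L a b (ind (SXsup L p)) 0 = 0 ∧ sp L a b 0 (ind (SZsup L p)) = 0

/-- `(a,b)` acts nontrivially on the logical qubits: it anticommutes with one of the logical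
operators `X̄₁, Z̄₁, X̄₂, Z̄₂` (supported on the lines `Γ = Gam L 0`, `Λ = Lam L 0`). -/
def NontrivialLogical (L : ℕ) [NeZero L] (a b : Q L → ZMod 2) : Prop :=
  sp L a b (ind (Gam L 0)) 0 ≠ 0 ∨ sp L a b 0 (ind (Lam L 0)) ≠ 0 ∨
  sp L a b (ind (Lam L 0)) 0 ≠ 0 ∨ sp L a b 0 (ind (Gam L 0)) ≠ 0


section Aux
variable (L : ℕ) [NeZero L]

lemma sp_indX (a b : Q L → ZMod 2) (S : Finset (Q L)) :
    sp L a b (ind S) 0 = ∑ q ∈ S, b q := by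
  simp [sp, ind, mul_ite, Finset.sum_ite_mem]

lemma sp_indZ (a b : Q L → ZMod 2) (S : Finset (Q L)) :
    sp L a b 0 (ind S) = ∑ q ∈ S, a q := by
  simp [sp, ind, mul_ite, Finset.sum_ite_mem]

lemma gam_sum (y : ZMod L) (f : Q L → ZMod 2) :
    ∑ q ∈ Gam L y, f q = ∑ x : ZMod L, (f (0, x, y) + f (1, x, y)) := by
  rw [Gam, Finset.sum_filter, Fintype.sum_prod_type, Fin.sum_univ_three]
  simp [Fintype.sum_prod_type, Finset.sum_ite_eq', Finset.sum_add_distrib]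

lemma lam_sum (x : ZMod L) (f : Q L → ZMod 2) :
    ∑ q ∈ Lam L x, f q = ∑ y : ZMod L, (f (0, x, y) + f (2, x, y)) := by
  rw [Lam, Finset.sum_filter, Fintype.sum_prod_type, Fin.sum_univ_three]
  simp [Fintype.sum_prod_type, Finset.sum_ite_eq', Finset.sum_add_distrib,
    Finset.sum_comm (γ := ZMod L)]

lemma sx_sum (h1 : (1 : ZMod L) ≠ 0) (p : ZMod L × ZMod L) (f : Q L → ZMod 2) :
    ∑ q ∈ SXsup L p, f q =
      f (0, p.1, p.2) + f (0, p.1 + 1, p.2 + 1) + f (1, p.1, p.2) + f (1, p.1, p.2 + 1) +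
      f (2, p.1, p.2) + f (2, p.1 + 1, p.2) := by
  have h2 : ∀ u : ZMod L, u + 1 ≠ u := fun u e => h1 (by linear_combination e)
  have h3 : ∀ u : ZMod L, u ≠ u + 1 := fun u e => h2 u e.symm
  rw [SXsup]
  rw [Finset.sum_insert (by simp [Prod.ext_iff, h3]),
      Finset.sum_insert (by simp [Prod.ext_iff, h3, h2]),
      Finset.sum_insert (by simp [Prod.ext_iff, h3]),
      Finset.sum_insert (by simp [Prod.ext_iff, h3, h2]),
      Finset.sum_insert (by simp [Prod.ext_iff, h3]),
      Finset.sum_singleton]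
  ring

lemma sz_sum (h1 : (1 : ZMod L) ≠ 0) (p : ZMod L × ZMod L) (f : Q L → ZMod 2) :
    ∑ q ∈ SZsup L p, f q =
      f (0, p.1 + 1, p.2) + f (0, p.1, p.2 + 1) + f (1, p.1, p.2) + f (1, p.1, p.2 + 1) +
      f (2, p.1, p.2) + f (2, p.1 + 1, p.2) := by
  have h2 : ∀ u : ZMod L, u + 1 ≠ u := fun u e => h1 (by linear_combination e)
  have h3 : ∀ u : ZMod L, u ≠ u + 1 := fun u e => h2 u e.symm
  rw [SZsup]
  rw [Finset.sum_insert (by simp [Prod.ext_iff, h3, h2]),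
      Finset.sum_insert (by simp [Prod.ext_iff, h3, h2]),
      Finset.sum_insert (by simp [Prod.ext_iff, h3]),
      Finset.sum_insert (by simp [Prod.ext_iff, h3, h2]),
      Finset.sum_insert (by simp [Prod.ext_iff, h3]),
      Finset.sum_singleton]
  ring

lemma all_eq_of_step (R : ZMod L → ZMod 2)
    (hstep : ∀ y, R (y + 1) = R y) (y : ZMod L) : R y = R 0 := by
  have key : ∀ n : ℕ, R (n : ZMod L) = R 0 := by
    intro n; induction n with
    | zero => simp
    | succ m ih => rw [Nat.cast_succ, hstep, ih]
  rw [← (ZMod.natCast_val y).trans (ZMod.cast_id _ _), key]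

lemma wt_lower (a b : Q L → ZMod 2) (π : Q L → ZMod L)
    (h : ∀ y : ZMod L, ∃ q, π q = y ∧ (a q ≠ 0 ∨ b q ≠ 0)) : L ≤ wt L a b := by
  choose g hg1 hg2 using h
  have hinj : Function.Injective g := fun y z e => by rw [← hg1 y, ← hg1 z, e]
  have := Finset.card_le_card_of_injOn (s := Finset.univ)
    (t := Finset.univ.filter fun q : Q L => a q ≠ 0 ∨ b q ≠ 0) g
    (fun y _ => Finset.mem_filter.2 ⟨Finset.mem_univ _, hg2 y⟩) hinj.injOn
  simpa [wt, ZMod.card] using this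

lemma exists_nonzero (f g : ZMod L → ZMod 2)
    (h : ∑ x : ZMod L, (f x + g x) ≠ 0) : ∃ x, f x ≠ 0 ∨ g x ≠ 0 := by
  by_contra hc
  push_neg at hc
  exact h (Finset.sum_eq_zero fun x _ => by rw [(hc x).1, (hc x).2, add_zero])

def Rrow (f : Q L → ZMod 2) (y : ZMod L) : ZMod 2 :=
  ∑ x : ZMod L, (f (0, x, y) + f (1, x, y))

def Rcol (f : Q L → ZMod 2) (x : ZMod L) : ZMod 2 :=
  ∑ y : ZMod L, (f (0, x, y) + f (2, x, y))

lemma char2_eq (u v : ZMod 2) (h : u + v = 0) : u = v := by revert u v; decide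

lemma step_row_SX (h1 : (1 : ZMod L) ≠ 0) (f : Q L → ZMod 2)
    (hyp : ∀ p : ZMod L × ZMod L, ∑ q ∈ SXsup L p, f q = 0) (y : ZMod L) :
    Rrow L f (y + 1) = Rrow L f y := by
  have h : ∑ x : ZMod L, (∑ q ∈ SXsup L (x, y), f q) = 0 :=
    Finset.sum_eq_zero fun x _ => hyp (x, y)
  simp only [sx_sum L h1, Finset.sum_add_distrib] at h
  have e1 : ∑ x : ZMod L, f (0, x + 1, y + 1) = ∑ x : ZMod L, f (0, x, y + 1) :=
    Fintype.sum_equiv (Equiv.addRight 1) _ _ (fun _ => rfl)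
  have e2 : ∑ x : ZMod L, f (2, x + 1, y) = ∑ x : ZMod L, f (2, x, y) :=
    Fintype.sum_equiv (Equiv.addRight 1) _ _ (fun _ => rfl)
  rw [e1, e2] at h
  apply char2_eq
  have two : (2 : ZMod 2) = 0 := rfl
  simp only [Rrow, Finset.sum_add_distrib]
  linear_combination h - (∑ x : ZMod L, f (2, x, y)) * two

lemma step_row_SZ (h1 : (1 : ZMod L) ≠ 0) (f : Q L → ZMod 2)
    (hyp : ∀ p : ZMod L × ZMod L, ∑ q ∈ SZsup L p, f q = 0) (y : ZMod L) :
    Rrow L f (y + 1) = Rrow L f y := by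
  have h : ∑ x : ZMod L, (∑ q ∈ SZsup L (x, y), f q) = 0 :=
    Finset.sum_eq_zero fun x _ => hyp (x, y)
  simp only [sz_sum L h1, Finset.sum_add_distrib] at h
  have e1 : ∑ x : ZMod L, f (0, x + 1, y) = ∑ x : ZMod L, f (0, x, y) :=
    Fintype.sum_equiv (Equiv.addRight 1) _ _ (fun _ => rfl)
  have e2 : ∑ x : ZMod L, f (2, x + 1, y) = ∑ x : ZMod L, f (2, x, y) :=
    Fintype.sum_equiv (Equiv.addRight 1) _ _ (fun _ => rfl)
  rw [e1, e2] at h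
  apply char2_eq
  have two : (2 : ZMod 2) = 0 := rfl
  simp only [Rrow, Finset.sum_add_distrib]
  linear_combination h - (∑ x : ZMod L, f (2, x, y)) * two

lemma step_col_SX (h1 : (1 : ZMod L) ≠ 0) (f : Q L → ZMod 2)
    (hyp : ∀ p : ZMod L × ZMod L, ∑ q ∈ SXsup L p, f q = 0) (x : ZMod L) :
    Rcol L f (x + 1) = Rcol L f x := by
  have h : ∑ y : ZMod L, (∑ q ∈ SXsup L (x, y), f q) = 0 :=
    Finset.sum_eq_zero fun y _ => hyp (x, y)
  simp only [sx_sum L h1, Finset.sum_add_distrib] at h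
  have e1 : ∑ y : ZMod L, f (0, x + 1, y + 1) = ∑ y : ZMod L, f (0, x + 1, y) :=
    Fintype.sum_equiv (Equiv.addRight 1) _ _ (fun _ => rfl)
  have e2 : ∑ y : ZMod L, f (1, x, y + 1) = ∑ y : ZMod L, f (1, x, y) :=
    Fintype.sum_equiv (Equiv.addRight 1) _ _ (fun _ => rfl)
  rw [e1, e2] at h
  apply char2_eq
  have two : (2 : ZMod 2) = 0 := rfl
  simp only [Rcol, Finset.sum_add_distrib]
  linear_combination h - (∑ y : ZMod L, f (1, x, y)) * two

lemma step_col_SZ (h1 : (1 : ZMod L) ≠ 0) (f : Q L → ZMod 2)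
    (hyp : ∀ p : ZMod L × ZMod L, ∑ q ∈ SZsup L p, f q = 0) (x : ZMod L) :
    Rcol L f (x + 1) = Rcol L f x := by
  have h : ∑ y : ZMod L, (∑ q ∈ SZsup L (x, y), f q) = 0 :=
    Finset.sum_eq_zero fun y _ => hyp (x, y)
  simp only [sz_sum L h1, Finset.sum_add_distrib] at h
  have e1 : ∑ y : ZMod L, f (0, x, y + 1) = ∑ y : ZMod L, f (0, x, y) :=
    Fintype.sum_equiv (Equiv.addRight 1) _ _ (fun _ => rfl)
  have e2 : ∑ y : ZMod L, f (1, x, y + 1) = ∑ y : ZMod L, f (1, x, y) :=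
    Fintype.sum_equiv (Equiv.addRight 1) _ _ (fun _ => rfl)
  rw [e1, e2] at h
  apply char2_eq
  have two : (2 : ZMod 2) = 0 := rfl
  simp only [Rcol, Finset.sum_add_distrib]
  linear_combination h - (∑ y : ZMod L, f (1, x, y)) * two

end Aux

/-- the subsystem toric code on the `L × L` torus has minimum distance
exactly `L`: every Pauli error commuting with all stabilizers and acting nontrivially on the
logical qubits has weight at least `L`, and some such operator has weight exactly `L`. -/
theorem subsystem_toric_code_distance (L : ℕ) [NeZero L] (hL : 2 ≤ L) :
    (∀ a b : Q L → ZMod 2, CommutesWithStabilizers L a b → NontrivialLogical L a b →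
      L ≤ wt L a b) ∧
    (∃ a b : Q L → ZMod 2, CommutesWithStabilizers L a b ∧ NontrivialLogical L a b ∧
      wt L a b = L) := by
  have h1 : (1 : ZMod L) ≠ 0 := by
    haveI : Fact (1 < L) := ⟨hL⟩
    exact one_ne_zero
  constructor
  · intro a b hcomm hnt
    rcases hnt with h | h | h | h
    · -- anticommutes with X̄₁ on Γ : row sums of b
      rw [sp_indX, gam_sum] at h
      have hX : ∀ p : ZMod L × ZMod L, ∑ q ∈ SXsup L p, b q = 0 := fun p => by
        have := (hcomm p).1; rwa [sp_indX] at this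
      have hall : ∀ y : ZMod L, Rrow L b y ≠ 0 := fun y => by
        rw [all_eq_of_step L (Rrow L b) (step_row_SX L h1 b hX) y]; exact h
      apply wt_lower L a b (fun q => q.2.2)
      intro y
      obtain ⟨x, hx⟩ := exists_nonzero L (fun x => b (0, x, y)) (fun x => b (1, x, y)) (hall y)
      rcases hx with hx | hx
      · exact ⟨(0, x, y), rfl, Or.inr hx⟩
      · exact ⟨(1, x, y), rfl, Or.inr hx⟩
    · -- anticommutes with Z̄₁ on Λ : column sums of a
      rw [sp_indZ, lam_sum] at h
      have hZ : ∀ p : ZMod L × ZMod L, ∑ q ∈ SZsup L p, a q = 0 := fun p => by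
        have := (hcomm p).2; rwa [sp_indZ] at this
      have hall : ∀ x : ZMod L, Rcol L a x ≠ 0 := fun x => by
        rw [all_eq_of_step L (Rcol L a) (step_col_SZ L h1 a hZ) x]; exact h
      apply wt_lower L a b (fun q => q.2.1)
      intro x
      obtain ⟨y, hy⟩ := exists_nonzero L (fun y => a (0, x, y)) (fun y => a (2, x, y)) (hall x)
      rcases hy with hy | hy
      · exact ⟨(0, x, y), rfl, Or.inl hy⟩
      · exact ⟨(2, x, y), rfl, Or.inl hy⟩
    · -- anticommutes with X̄₂ on Λ : column sums of b
      rw [sp_indX, lam_sum] at h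
      have hX : ∀ p : ZMod L × ZMod L, ∑ q ∈ SXsup L p, b q = 0 := fun p => by
        have := (hcomm p).1; rwa [sp_indX] at this
      have hall : ∀ x : ZMod L, Rcol L b x ≠ 0 := fun x => by
        rw [all_eq_of_step L (Rcol L b) (step_col_SX L h1 b hX) x]; exact h
      apply wt_lower L a b (fun q => q.2.1)
      intro x
      obtain ⟨y, hy⟩ := exists_nonzero L (fun y => b (0, x, y)) (fun y => b (2, x, y)) (hall x)
      rcases hy with hy | hy
      · exact ⟨(0, x, y), rfl, Or.inr hy⟩
      · exact ⟨(2, x, y), rfl, Or.inr hy⟩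
    · -- anticommutes with Z̄₂ on Γ : row sums of a
      rw [sp_indZ, gam_sum] at h
      have hZ : ∀ p : ZMod L × ZMod L, ∑ q ∈ SZsup L p, a q = 0 := fun p => by
        have := (hcomm p).2; rwa [sp_indZ] at this
      have hall : ∀ y : ZMod L, Rrow L a y ≠ 0 := fun y => by
        rw [all_eq_of_step L (Rrow L a) (step_row_SZ L h1 a hZ) y]; exact h
      apply wt_lower L a b (fun q => q.2.2)
      intro y
      obtain ⟨x, hx⟩ := exists_nonzero L (fun x => a (0, x, y)) (fun x => a (1, x, y)) (hall y)
      rcases hx with hx | hx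
      · exact ⟨(0, x, y), rfl, Or.inl hx⟩
      · exact ⟨(1, x, y), rfl, Or.inl hx⟩
  · -- existence: Z on all horizontal edges in column 0 (a dressed logical of weight L)
    refine ⟨0, fun q => if q.1 = 1 ∧ q.2.1 = 0 then 1 else 0, ?_, ?_, ?_⟩
    · intro p
      constructor
      · rw [sp_indX, sx_sum L h1]
        rcases eq_or_ne p.1 0 with hp | hp <;> simp [hp]
        decide
      · rw [sp_indZ]
        simp
    · left
      rw [sp_indX, gam_sum]
      simp [Finset.sum_ite_eq']
    · rw [wt, Finset.card_filter, Fintype.sum_prod_type, Fin.sum_univ_three]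
      simp [Fintype.sum_prod_type, Finset.sum_ite_eq', ZMod.card]
      rw [show (Finset.univ.filter fun x : ZMod L × ZMod L => x.1 = 0) =
          {(0 : ZMod L)} ×ˢ (Finset.univ : Finset (ZMod L)) from by ext ⟨u, v⟩; simp [eq_comm]]
      simp [ZMod.card]
end

section
/- If Z̄₁ and Z̄₁' are Z-type operators supported on two parallel vertical lines Λ and Λ' of the torus lattice, then Z̄₁Z̄₁' equals the product of the stabilizers S^Z_p over all plaquettes p lying in the region between Λ and Λ'; hence Z̄₁ and Z̄₁' are equivalent modulo the stabilizer group. -/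
lemma cardA (L : ℕ) [NeZero L] (v : ZMod L) :
    (Finset.univ.filter fun x : ZMod L => v = x).card = 1 := by
  simp [Finset.filter_eq]

lemma cardB (L : ℕ) [NeZero L] (v : ZMod L) :
    (Finset.univ.filter fun x : ZMod L => v = x + 1).card = 1 := by
  have h : ∀ x : ZMod L, (v = x + 1) ↔ (x = v - 1) :=
    fun x => ⟨fun h => by rw [h]; ring, fun h => by rw [h]; ring⟩
  simp only [h]
  simp [Finset.filter_eq']

lemma cardC (L : ℕ) [NeZero L] (hne : ∀ b : ZMod L, b ≠ b + 1) (v : ZMod L) :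
    (Finset.univ.filter fun x : ZMod L => v = x ∨ v = x + 1).card = 2 := by
  have h : ∀ x : ZMod L, (v = x ∨ v = x + 1) ↔ (x = v ∨ x = v - 1) := by
    intro x
    constructor
    · rintro (h | h)
      · exact Or.inl h.symm
      · exact Or.inr (by rw [h]; ring)
    · rintro (h | h)
      · exact Or.inl h.symm
      · exact Or.inr (by rw [h]; ring)
  simp only [h, Finset.filter_or, Finset.filter_eq', Finset.mem_univ, if_true]
  rw [Finset.card_union_of_disjoint]
  · simp
  · simp only [Finset.disjoint_singleton]
    intro hvv
    exact hne (v - 1) (by linear_combination -hvv)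

lemma colsum (L : ℕ) [NeZero L] (hL : 2 ≤ L) (a : ZMod L) :
    ∑ y : ZMod L, ind (SZsup L (a, y)) = ind (Lam L a) + ind (Lam L (a + 1)) := by
  haveI : Fact (1 < L) := ⟨hL⟩
  have hone : (1 : ZMod L) ≠ 0 := one_ne_zero
  have hne : ∀ b : ZMod L, b ≠ b + 1 := fun b h => hone (by linear_combination -h)
  have h2z : ((2 : ℕ) : ZMod 2) = 0 := by decide
  have h2z' : (2 : ZMod 2) = 0 := by decide
  funext q
  obtain ⟨i, u, v⟩ := q
  simp only [Finset.sum_apply, Pi.add_apply, ind, Lam, SZsup, Finset.mem_insert,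
    Finset.mem_singleton, Finset.mem_filter, Finset.mem_univ, true_and, Prod.mk.injEq]
  fin_cases i
  · simp only [Fin.ext_iff, Fin.val_zero, Fin.val_one, Fin.val_two, Fin.isValue]
    norm_num
    by_cases h1 : u = a <;> by_cases h2 : u = a + 1
    · exact absurd (h1 ▸ h2) (hne a)
    · simp [h1, h2, cardB]
    · simp [h1, h2, cardA]
    · simp [h1, h2]
  · simp only [Fin.ext_iff, Fin.val_zero, Fin.val_one, Fin.val_two, Fin.isValue]
    norm_num
    by_cases h1 : u = a
    · simp [h1, cardC L hne, h2z, h2z']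
    · simp [h1]
  · simp only [Fin.ext_iff, Fin.val_zero, Fin.val_one, Fin.val_two, Fin.isValue]
    norm_num
    by_cases h1 : u = a <;> by_cases h2 : u = a + 1
    · exact absurd (h1 ▸ h2) (hne a)
    · simp [h1, h2, cardA]
    · simp [h1, h2, cardA]
    · simp [h1, h2]

/-- for the subsystem toric code, if `Z̄₁`, `Z̄₁'` are the Z-type operators
supported on the vertical lines `Λ` at position `x` and `Λ'` at position `x + k`, then
`Z̄₁ Z̄₁'` equals the product of the stabilizers `S^Z_p` over all plaquettes `p` in the columns
`x, x+1, …, x+k−1` between the two lines (supports added over `F₂`); in particular `Z̄₁` and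
`Z̄₁'` are equivalent modulo the stabilizer group. -/
theorem parallel_logicals_differ_by_stabilizers (L : ℕ) [NeZero L] (hL : 2 ≤ L)
    (x : ZMod L) (k : ℕ) :
    (ind (Lam L x) + ind (Lam L (x + (k : ZMod L))) =
      ∑ j ∈ Finset.range k, ∑ y : ZMod L, ind (SZsup L (x + (j : ZMod L), y))) ∧
    (ind (Lam L x) + ind (Lam L (x + (k : ZMod L))) ∈
      Submodule.span (ZMod 2) (Set.range fun p : ZMod L × ZMod L => ind (SZsup L p))) := by
  have self : ∀ f : Q L → ZMod 2, f + f = 0 := by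
    intro f; funext q; exact CharTwo.add_self_eq_zero _
  have main : ind (Lam L x) + ind (Lam L (x + (k : ZMod L))) =
      ∑ j ∈ Finset.range k, ∑ y : ZMod L, ind (SZsup L (x + (j : ZMod L), y)) := by
    induction k with
    | zero => simpa using self (ind (Lam L x))
    | succ n ih =>
      rw [Finset.sum_range_succ, ← ih, colsum L hL (x + (n : ZMod L))]
      push_cast
      ring_nf
      rw [mul_two, self, add_zero]
  refine ⟨main, main ▸ ?_⟩
  exact Submodule.sum_mem _ fun j _ => Submodule.sum_mem _ fun y _ =>
    Submodule.subset_span ⟨(x + (j : ZMod L), y), rfl⟩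
end
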